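/- arXiv:0905.4913 — 2 statements merged into one kernel-verified Lean document; each statement's English description precedes it below -/
import Mathlib

section
/- Let G₁ and G₂ be two simple directed graphs on the same vertex set realizing the same bi-degree sequence (d⁺, d⁻). Then there exists a finite sequence of two-edge swaps and three-edge (triangle-reversal) swaps transforming G₁ into G₂, each intermediate graph being a simple directed graph realizing (d⁺, d⁻). -/
/-!
Induct on the number of positions at which `E₁` and `E₂` differ. Call the edges only in `E₁` red
and those only in `E₂` blue; every vertex has as many red as blue out-edges, and as many red as
blue in-edges, so the difference contains a closed walk alternating between red edges traversed
forwards and blue edges traversed backwards. Take a shortest one and look at three consecutive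
edges `x → y ← x' → y'` (red, blue, red). If `x → y'` is absent from `E₁` (and `x ≠ y'`), a
two-edge swap in `E₁` moves it closer to `E₂`; if it is present in both, a two-edge swap in `E₂`
moves it closer to `E₁`; if it is red, it is a chord shortening the walk. Reversing all edges and
exchanging the two graphs turns blue–red–blue patterns into red–blue–red ones. So in the remaining
case `x = y'` at every red–blue–red and every blue–red–blue pattern, which forces the walk to run
around a directed triangle of `E₁` whose reversal lies in `E₂`, and a three-edge swap removes it.
-/

/-- Out-degree of `v` in the digraph with (boolean) adjacency `E`. -/
def outDeg {n : ℕ} (E : Fin n → Fin n → Bool) (v : Fin n) : ℕ :=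
  (Finset.univ.filter (fun w => E v w = true)).card

/-- In-degree of `v` in the digraph with (boolean) adjacency `E`. -/
def inDeg {n : ℕ} (E : Fin n → Fin n → Bool) (v : Fin n) : ℕ :=
  (Finset.univ.filter (fun w => E w v = true)).card

/-- `E` is a simple directed graph (no loops; at most one edge in each
direction) realizing the bi-degree sequence `(dp, dm)`. -/
def Realizes {n : ℕ} (E : Fin n → Fin n → Bool) (dp dm : Fin n → ℕ) : Prop :=
  (∀ v, E v v = false) ∧ ∀ v, outDeg E v = dp v ∧ inDeg E v = dm v

/-- A bi-degree sequence is bi-graphical if some simple digraph realizes it. -/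
def BiGraphical (n : ℕ) (dp dm : Fin n → ℕ) : Prop :=
  ∃ E : Fin n → Fin n → Bool, Realizes E dp dm

/-- A two-edge swap: the edges `a→b`, `c→d` (present) are replaced by `a→d`,
`c→b` (previously absent, non-loops). -/
def TwoSwap {n : ℕ} (E E' : Fin n → Fin n → Bool) : Prop :=
  ∃ a b c d : Fin n,
    a ≠ b ∧ c ≠ d ∧ a ≠ d ∧ c ≠ b ∧
    E a b = true ∧ E c d = true ∧ E a d = false ∧ E c b = false ∧
    ∀ x y, E' x y =
      (if (x = a ∧ y = b) ∨ (x = c ∧ y = d) then false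
       else if (x = a ∧ y = d) ∨ (x = c ∧ y = b) then true
       else E x y)

/-- A three-edge swap: the directed triangle `a→b→c→a` is reversed
(its reversal being previously absent). -/
def ThreeSwap {n : ℕ} (E E' : Fin n → Fin n → Bool) : Prop :=
  ∃ a b c : Fin n,
    a ≠ b ∧ b ≠ c ∧ a ≠ c ∧
    E a b = true ∧ E b c = true ∧ E c a = true ∧
    E b a = false ∧ E c b = false ∧ E a c = false ∧
    ∀ x y, E' x y =
      (if (x = a ∧ y = b) ∨ (x = b ∧ y = c) ∨ (x = c ∧ y = a) then false
       else if (x = b ∧ y = a) ∨ (x = c ∧ y = b) ∨ (x = a ∧ y = c) then true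
       else E x y)

/-- A swap is a two-edge swap or a three-edge swap. -/
def Swap {n : ℕ} (E E' : Fin n → Fin n → Bool) : Prop :=
  TwoSwap E E' ∨ ThreeSwap E E'

section

open Finset Function

theorem hammingDist_lt_of_fix_two {ι β : Type*} [Fintype ι] [DecidableEq ι] [DecidableEq β]
    {f g h : ι → β} {p q s : ι} (hpq : p ≠ q) (hfp : f p ≠ h p) (hfq : f q ≠ h q)
    (hgp : g p = h p) (hgq : g q = h q) (hg : ∀ i, g i ≠ h i → i = s ∨ f i ≠ h i) :
    hammingDist g h < hammingDist f h := by
  set D := ({i | f i ≠ h i} : Finset ι)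
  have hsub : ({i | g i ≠ h i} : Finset ι) ⊆ insert s ((D.erase p).erase q) := by
    intro i hi
    simp only [mem_filter, mem_univ, true_and] at hi
    rcases hg i hi with rfl | hfi
    · exact mem_insert_self _ _
    · refine mem_insert_of_mem (mem_erase.2 ⟨?_, mem_erase.2 ⟨?_, by simpa [D] using hfi⟩⟩)
      · rintro rfl; exact hi hgq
      · rintro rfl; exact hi hgp
  have hp : p ∈ D := by simpa [D] using hfp
  have hq : q ∈ D.erase p := mem_erase.2 ⟨hpq.symm, by simpa [D] using hfq⟩
  calc hammingDist g h ≤ #(insert s ((D.erase p).erase q)) := card_le_card hsub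
    _ ≤ #((D.erase p).erase q) + 1 := card_insert_le _ _
    _ < #D := by
      rw [card_erase_of_mem hq, card_erase_of_mem hp]
      have := card_pos.2 ⟨q, hq⟩
      rw [card_erase_of_mem hp] at this
      omega

theorem Relation.ReflTransGen.exists_fin_path {α : Type*} {r : α → α → Prop} {a b : α}
    (h : Relation.ReflTransGen r a b) :
    ∃ (m : ℕ) (f : Fin (m + 1) → α), f 0 = a ∧ f (Fin.last m) = b ∧
      ∀ j : Fin m, r (f j.castSucc) (f j.succ) := by
  induction h with
  | refl => exact ⟨0, fun _ => a, rfl, rfl, fun j => j.elim0⟩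
  | @tail b c _ hbc ih =>
    obtain ⟨m, f, h0, hlast, hstep⟩ := ih
    refine ⟨m + 1, Fin.snoc f c, by simpa using h0, by simp, fun j => ?_⟩
    induction j using Fin.lastCases with
    | last => simpa [hlast] using hbc
    | cast i => rw [Fin.succ_castSucc, Fin.snoc_castSucc, Fin.snoc_castSucc]; exact hstep i

variable {n : ℕ}

def OnlyIn (E F : Fin n → Fin n → Bool) (x y : Fin n) : Prop :=
  E x y = true ∧ F x y = false

def edgeDist (E F : Fin n → Fin n → Bool) : ℕ :=
  hammingDist (uncurry E) (uncurry F)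

theorem edgeDist_comm (E F : Fin n → Fin n → Bool) : edgeDist E F = edgeDist F E :=
  hammingDist_comm _ _

theorem edgeDist_flip (E F : Fin n → Fin n → Bool) :
    edgeDist (flip E) (flip F) = edgeDist E F := by
  unfold edgeDist hammingDist
  refine card_bij (fun p _ => p.swap) ?_ (by simp) fun ⟨x, y⟩ h => ⟨(y, x), ?_, rfl⟩ <;>
    simp_all [flip]

theorem outDeg_eq_sum (E : Fin n → Fin n → Bool) (v : Fin n) :
    outDeg E v = ∑ w, if E v w then 1 else 0 :=
  card_filter _ _

theorem inDeg_eq_sum (E : Fin n → Fin n → Bool) (v : Fin n) :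
    inDeg E v = ∑ w, if E w v then 1 else 0 :=
  card_filter _ _

theorem degrees_eq_of_add_eq {E G : Fin n → Fin n → Bool} (P Q : Fin n → Fin n → ℕ)
    (h : ∀ x y, (if G x y then 1 else 0) + P x y = (if E x y then 1 else 0) + Q x y)
    (hrow : ∀ x, ∑ y, P x y = ∑ y, Q x y) (hcol : ∀ y, ∑ x, P x y = ∑ x, Q x y) :
    (∀ v, outDeg G v = outDeg E v) ∧ ∀ v, inDeg G v = inDeg E v := by
  constructor <;> intro v
  · have := Fintype.sum_congr _ _ (h v)
    simp only [sum_add_distrib, ← outDeg_eq_sum, hrow] at this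
    omega
  · have := Fintype.sum_congr _ _ (fun x => h x v)
    simp only [sum_add_distrib, ← inDeg_eq_sum, hcol] at this
    omega

theorem realizes_of_twoSwap {E G : Fin n → Fin n → Bool} {dp dm : Fin n → ℕ} (h : TwoSwap E G)
    (hE : Realizes E dp dm) : Realizes G dp dm := by
  obtain ⟨a, b, c, d, hab, hcd, had, hcb, hEab, hEcd, hEad, hEcb, hG⟩ := h
  have hdeg := degrees_eq_of_add_eq (E := E) (G := G)
    (fun x y => (if x = a ∧ y = b then 1 else 0) + (if x = c ∧ y = d then 1 else 0))
    (fun x y => (if x = a ∧ y = d then 1 else 0) + (if x = c ∧ y = b then 1 else 0))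
    (fun x y => by rw [hG]; grind)
    (fun x => by simp [sum_add_distrib, ite_and])
    (fun y => by simp [sum_add_distrib, ite_and]; omega)
  refine ⟨fun v => ?_, fun v => ?_⟩
  · have := hE.1 v; rw [hG]; grind
  · rw [hdeg.1, hdeg.2]; exact hE.2 v

theorem realizes_of_threeSwap {E G : Fin n → Fin n → Bool} {dp dm : Fin n → ℕ}
    (h : ThreeSwap E G) (hE : Realizes E dp dm) : Realizes G dp dm := by
  obtain ⟨a, b, c, hab, hbc, hac, hEab, hEbc, hEca, hEba, hEcb, hEac, hG⟩ := h
  have hdeg := degrees_eq_of_add_eq (E := E) (G := G)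
    (fun x y => (if x = a ∧ y = b then 1 else 0) + (if x = b ∧ y = c then 1 else 0) +
      (if x = c ∧ y = a then 1 else 0))
    (fun x y => (if x = b ∧ y = a then 1 else 0) + (if x = c ∧ y = b then 1 else 0) +
      (if x = a ∧ y = c then 1 else 0))
    (fun x y => by rw [hG]; grind)
    (fun x => by simp [sum_add_distrib, ite_and]; omega)
    (fun y => by simp [sum_add_distrib, ite_and]; omega)
  refine ⟨fun v => ?_, fun v => ?_⟩
  · have := hE.1 v; rw [hG]; grind
  · rw [hdeg.1, hdeg.2]; exact hE.2 v

theorem realizes_of_swap {E G : Fin n → Fin n → Bool} {dp dm : Fin n → ℕ} (h : Swap E G)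
    (hE : Realizes E dp dm) : Realizes G dp dm :=
  h.elim (realizes_of_twoSwap · hE) (realizes_of_threeSwap · hE)

theorem TwoSwap.symm {E G : Fin n → Fin n → Bool} (h : TwoSwap E G) : TwoSwap G E := by
  obtain ⟨a, b, c, d, hab, hcd, had, hcb, hEab, hEcd, hEad, hEcb, hG⟩ := h
  refine ⟨a, d, c, b, had, hcb, hab, hcd, ?_, ?_, ?_, ?_, fun x y => ?_⟩ <;> rw [hG] <;> grind

theorem TwoSwap.flip {E G : Fin n → Fin n → Bool} (h : TwoSwap E G) :
    TwoSwap (flip E) (flip G) := by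
  obtain ⟨a, b, c, d, hab, hcd, had, hcb, hEab, hEcd, hEad, hEcb, hG⟩ := h
  refine ⟨b, a, d, c, hab.symm, hcd.symm, hcb.symm, had.symm, hEab, hEcd, hEcb, hEad,
    fun x y => ?_⟩
  simp only [Function.flip_def]
  rw [hG]
  grind

theorem exists_onlyIn_of_outDeg_eq {E F : Fin n → Fin n → Bool} {x y : Fin n}
    (hdeg : outDeg E x = outDeg F x) (h : OnlyIn F E x y) : ∃ w, OnlyIn E F x w := by
  have hy : y ∈ univ.filter (F x · = true) \ univ.filter (E x · = true) := by
    simp [h.1, h.2]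
  obtain ⟨w, hw⟩ := card_pos.1 ((card_sdiff_eq_card_sdiff_iff.2 hdeg).symm ▸ card_pos.2 ⟨y, hy⟩)
  exact ⟨w, by simpa [OnlyIn] using hw⟩

theorem exists_onlyIn_of_inDeg_eq {E F : Fin n → Fin n → Bool} {x y : Fin n}
    (hdeg : inDeg E y = inDeg F y) (h : OnlyIn F E x y) : ∃ w, OnlyIn E F w y :=
  exists_onlyIn_of_outDeg_eq (E := flip E) (F := flip F) hdeg h

def IsAltWalk (E F : Fin n → Fin n → Bool) (a b : ℕ → Fin n) : Prop :=
  ∀ i, OnlyIn E F (a i) (b i) ∧ OnlyIn F E (a (i + 1)) (b i)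

/-- A closed alternating walk of length `2 k`, encoded by `k`-periodic vertex sequences. -/
def HasClosedAltWalk (E F : Fin n → Fin n → Bool) (k : ℕ) : Prop :=
  0 < k ∧ ∃ a b, IsAltWalk E F a b ∧ Periodic a k ∧ Periodic b k

theorem IsAltWalk.flip {E F : Fin n → Fin n → Bool} {a b : ℕ → Fin n} (h : IsAltWalk E F a b) :
    IsAltWalk (flip F) (flip E) b (fun i => a (i + 1)) :=
  fun i => ⟨(h i).2, (h (i + 1)).1⟩

theorem HasClosedAltWalk.flip {E F : Fin n → Fin n → Bool} {k : ℕ}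
    (h : HasClosedAltWalk E F k) : HasClosedAltWalk (flip F) (flip E) k := by
  obtain ⟨hk, a, b, hw, ha, hb⟩ := h
  exact ⟨hk, b, fun i => a (i + 1), hw.flip, hb, ha.add_const 1⟩

theorem hasClosedAltWalk_of_segment {E F : Fin n → Fin n → Bool} {k : ℕ} (hk : 0 < k)
    (a b : ℕ → Fin n) (hred : ∀ i < k, OnlyIn E F (a i) (b i))
    (hblue : ∀ i, i + 1 < k → OnlyIn F E (a (i + 1)) (b i))
    (hclose : OnlyIn F E (a 0) (b (k - 1))) : HasClosedAltWalk E F k := by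
  refine ⟨hk, fun i => a (i % k), fun i => b (i % k), fun i => ⟨hred _ (Nat.mod_lt _ hk), ?_⟩,
    (Nat.periodic_mod k).comp a, (Nat.periodic_mod k).comp b⟩
  simp only [← Nat.mod_add_mod i]
  rcases Nat.lt_or_ge (i % k + 1) k with hi | hi
  · rw [Nat.mod_eq_of_lt hi]
    exact hblue _ hi
  · rw [show i % k + 1 = k by have := Nat.mod_lt i hk; omega, Nat.mod_self,
      show i % k = k - 1 by have := Nat.mod_lt i hk; omega]
    exact hclose

theorem exists_hasClosedAltWalk {E F : Fin n → Fin n → Bool}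
    (hout : ∀ v, outDeg E v = outDeg F v) (hin : ∀ v, inDeg E v = inDeg F v) (hne : E ≠ F) :
    ∃ k, HasClosedAltWalk E F k := by
  obtain ⟨p₀⟩ : Nonempty {p : Fin n × Fin n // OnlyIn E F p.1 p.2} := by
    obtain ⟨x, y, hxy⟩ : ∃ x y, E x y ≠ F x y := by
      by_contra! h; exact hne (funext₂ h)
    cases hE : E x y
    · obtain ⟨w, hw⟩ :=
        exists_onlyIn_of_outDeg_eq (hout x) (y := y) ⟨by simpa [hE] using hxy.symm, hE⟩
      exact ⟨⟨(x, w), hw⟩⟩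
    · exact ⟨⟨(x, y), hE, by simpa [hE] using hxy.symm⟩⟩
  have hstep : ∀ p : {p : Fin n × Fin n // OnlyIn E F p.1 p.2},
      ∃ q : {p : Fin n × Fin n // OnlyIn E F p.1 p.2}, OnlyIn F E q.1.1 p.1.2 := by
    rintro ⟨⟨x, y⟩, hxy⟩
    obtain ⟨x', hx'⟩ := exists_onlyIn_of_inDeg_eq (hin y).symm hxy
    obtain ⟨y', hy'⟩ := exists_onlyIn_of_outDeg_eq (hout x') hx'
    exact ⟨⟨(x', y'), hy'⟩, hx'⟩
  choose next hnext using hstep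
  set s := fun t => next^[t] p₀
  have hwalk : ∀ i, IsAltWalk E F (fun t => (s (t + i)).1.1) (fun t => (s (t + i)).1.2) := by
    intro i t
    refine ⟨(s (t + i)).2, ?_⟩
    have : s (t + 1 + i) = next (s (t + i)) := by
      simp only [s, Nat.add_right_comm t 1 i, iterate_succ_apply']
    simpa only [this] using hnext (s (t + i))
  have hcycle : ∀ i j, i < j → s i = s j → HasClosedAltWalk E F (j - i) := by
    intro i j hij hs
    have hper : Periodic (fun t => s (t + i)) (j - i) := fun t => by
      simp only [s, show t + (j - i) + i = t + j by omega, iterate_add_apply]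
      exact congrArg (next^[t]) hs.symm
    exact ⟨by omega, _, _, hwalk i, hper.comp (fun p => p.1.1), hper.comp (fun p => p.1.2)⟩
  obtain ⟨i, j, hij, hs⟩ := Finite.exists_ne_map_eq_of_infinite s
  rcases hij.lt_or_gt with h | h
  · exact ⟨_, hcycle i j h hs⟩
  · exact ⟨_, hcycle j i h hs.symm⟩

theorem edgeDist_lt_of_fix_two {E G F : Fin n → Fin n → Bool} {x₁ y₁ x₂ y₂ u v : Fin n}
    (h₁₂ : (x₁, y₁) ≠ (x₂, y₂)) (hE₁ : E x₁ y₁ ≠ F x₁ y₁) (hE₂ : E x₂ y₂ ≠ F x₂ y₂)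
    (hG₁ : G x₁ y₁ = F x₁ y₁) (hG₂ : G x₂ y₂ = F x₂ y₂)
    (hG : ∀ x y, G x y ≠ F x y → (x = u ∧ y = v) ∨ E x y ≠ F x y) :
    edgeDist G F < edgeDist E F :=
  hammingDist_lt_of_fix_two (p := (x₁, y₁)) (q := (x₂, y₂)) (s := (u, v))
    h₁₂ hE₁ hE₂ hG₁ hG₂ fun ⟨x, y⟩ h => by simpa using hG x y h

def swapEdges (E : Fin n → Fin n → Bool) (a b c d : Fin n) : Fin n → Fin n → Bool :=
  fun x y =>
    if (x = a ∧ y = b) ∨ (x = c ∧ y = d) then false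
    else if (x = a ∧ y = d) ∨ (x = c ∧ y = b) then true
    else E x y

def TwoSwapCloser (E F : Fin n → Fin n → Bool) : Prop :=
  (∃ G, TwoSwap E G ∧ edgeDist G F < edgeDist E F) ∨
    ∃ G, TwoSwap F G ∧ edgeDist E G < edgeDist E F

theorem TwoSwapCloser.of_flip {E F : Fin n → Fin n → Bool}
    (h : TwoSwapCloser (flip F) (flip E)) : TwoSwapCloser E F := by
  rcases h with ⟨G, hG, hlt⟩ | ⟨G, hG, hlt⟩
  · refine Or.inr ⟨flip G, hG.flip, ?_⟩
    calc edgeDist E (flip G) = edgeDist G (flip E) := by rw [edgeDist_comm, ← edgeDist_flip]; rfl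
      _ < edgeDist (flip F) (flip E) := hlt
      _ = edgeDist E F := by rw [edgeDist_flip, edgeDist_comm]
  · refine Or.inl ⟨flip G, hG.flip, ?_⟩
    calc edgeDist (flip G) F = edgeDist (flip F) G := by rw [edgeDist_comm, ← edgeDist_flip]; rfl
      _ < edgeDist (flip F) (flip E) := hlt
      _ = edgeDist E F := by rw [edgeDist_flip, edgeDist_comm]

theorem twoSwapCloser_or_onlyIn_or_eq {E F : Fin n → Fin n → Bool} (hE : ∀ v, E v v = false)
    (hF : ∀ v, F v v = false) {x y x' y' : Fin n} (h₁ : OnlyIn E F x y) (h₂ : OnlyIn F E x' y)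
    (h₃ : OnlyIn E F x' y') : TwoSwapCloser E F ∨ OnlyIn E F x y' ∨ x = y' := by
  have hxy : x ≠ y := by rintro rfl; simp [hE, OnlyIn] at h₁
  have hx'y : x' ≠ y := by rintro rfl; simp [hF, OnlyIn] at h₂
  have hx'y' : x' ≠ y' := by rintro rfl; simp [hE, OnlyIn] at h₃
  have hxx' : x ≠ x' := by rintro rfl; simp [OnlyIn, h₁.1] at h₂
  cases hExy' : E x y'
  · by_cases hxy' : x = y'
    · exact Or.inr (Or.inr hxy')
    refine Or.inl (Or.inl ⟨swapEdges E x y x' y',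
      ⟨x, y, x', y', hxy, hx'y', hxy', hx'y, h₁.1, h₃.1, hExy', h₂.2, fun _ _ => rfl⟩, ?_⟩)
    refine edgeDist_lt_of_fix_two (x₁ := x) (y₁ := y) (x₂ := x') (y₂ := y') (u := x) (v := y')
      ?_ ?_ ?_ ?_ ?_ ?_
    all_goals grind [OnlyIn, swapEdges]
  · cases hFxy' : F x y'
    · exact Or.inr (Or.inl ⟨hExy', hFxy'⟩)
    have hxy' : x ≠ y' := by rintro rfl; simp [hF] at hFxy'
    refine Or.inl (Or.inr ⟨swapEdges F x' y x y',
      ⟨x', y, x, y', hx'y, hxy', hx'y', hxy, h₂.1, hFxy', h₃.2, h₁.2, fun _ _ => rfl⟩, ?_⟩)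
    rw [edgeDist_comm, edgeDist_comm E]
    refine edgeDist_lt_of_fix_two (x₁ := x') (y₁ := y) (x₂ := x) (y₂ := y) (u := x) (v := y')
      ?_ ?_ ?_ ?_ ?_ ?_
    all_goals grind [OnlyIn, swapEdges]

theorem exists_shorter_of_onlyIn_chord {E F : Fin n → Fin n → Bool} {a b : ℕ → Fin n} {k : ℕ}
    (hw : IsAltWalk E F a b) (ha : Periodic a k) (hk : 0 < k) {j : ℕ}
    (hchord : OnlyIn E F (a j) (b (j + 1))) : ∃ k' < k, HasClosedAltWalk E F k' := by
  have hk1 : k ≠ 1 := by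
    rintro rfl
    have := (hw j).2.2
    rw [ha j, (hw j).1.1] at this
    exact Bool.noConfusion this
  refine ⟨k - 1, by omega, hasClosedAltWalk_of_segment (by omega)
    (fun i => if i = 0 then a j else a (j + 1 + i)) (fun i => b (j + 1 + i)) ?_ ?_ ?_⟩
  · rintro (_ | i) -
    · exact hchord
    · exact (hw _).1
  · exact fun i _ => (hw _).2
  · have := (hw (j + k - 1)).2
    rwa [show j + k - 1 + 1 = j + k by omega, ha j, show j + k - 1 = j + 1 + (k - 1 - 1) by omega]
      at this

theorem twoSwapCloser_or_shorter_or_eq {E F : Fin n → Fin n → Bool} (hE : ∀ v, E v v = false)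
    (hF : ∀ v, F v v = false) {a b : ℕ → Fin n} {k : ℕ} (hw : IsAltWalk E F a b)
    (ha : Periodic a k) (hk : 0 < k) (j : ℕ) :
    TwoSwapCloser E F ∨ (∃ k' < k, HasClosedAltWalk E F k') ∨ a j = b (j + 1) := by
  rcases twoSwapCloser_or_onlyIn_or_eq hE hF (hw j).1 (hw j).2 (hw (j + 1)).1 with h | h | h
  · exact Or.inl h
  · exact Or.inr (Or.inl (exists_shorter_of_onlyIn_chord hw ha hk h))
  · exact Or.inr (Or.inr h)

def reverseTriangle (E : Fin n → Fin n → Bool) (a b c : Fin n) : Fin n → Fin n → Bool :=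
  fun x y =>
    if (x = a ∧ y = b) ∨ (x = b ∧ y = c) ∨ (x = c ∧ y = a) then false
    else if (x = b ∧ y = a) ∨ (x = c ∧ y = b) ∨ (x = a ∧ y = c) then true
    else E x y

theorem exists_threeSwap_closer {E F : Fin n → Fin n → Bool} (hE : ∀ v, E v v = false)
    {a b c : Fin n} (hab : OnlyIn E F a b) (hbc : OnlyIn E F b c) (hca : OnlyIn E F c a)
    (hba : OnlyIn F E b a) (hcb : OnlyIn F E c b) (hac : OnlyIn F E a c) :
    ∃ G, ThreeSwap E G ∧ edgeDist G F < edgeDist E F := by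
  have hab' : a ≠ b := by rintro rfl; simp [hE, OnlyIn] at hab
  have hbc' : b ≠ c := by rintro rfl; simp [hE, OnlyIn] at hbc
  have hac' : a ≠ c := by rintro rfl; simp [hE, OnlyIn] at hca
  refine ⟨reverseTriangle E a b c, ⟨a, b, c, hab', hbc', hac', hab.1, hbc.1, hca.1, hba.2, hcb.2,
    hac.2, fun _ _ => rfl⟩, ?_⟩
  refine edgeDist_lt_of_fix_two (x₁ := a) (y₁ := b) (x₂ := c) (y₂ := a) (u := a) (v := a)
    ?_ ?_ ?_ ?_ ?_ ?_
  all_goals grind [OnlyIn, reverseTriangle]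

theorem closer_or_shorter_of_hasClosedAltWalk {E F : Fin n → Fin n → Bool}
    (hE : ∀ v, E v v = false) (hF : ∀ v, F v v = false) {k : ℕ} (h : HasClosedAltWalk E F k) :
    TwoSwapCloser E F ∨ (∃ G, ThreeSwap E G ∧ edgeDist G F < edgeDist E F) ∨
      ∃ k' < k, HasClosedAltWalk E F k' := by
  obtain ⟨hk, a, b, hw, ha, hb⟩ := h
  by_cases hc : TwoSwapCloser E F ∨ ∃ k' < k, HasClosedAltWalk E F k'
  · tauto
  have h₁ : ∀ j, a j = b (j + 1) := fun j => by
    rcases twoSwapCloser_or_shorter_or_eq hE hF hw ha hk j with h | h | h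
    exacts [absurd (Or.inl h) hc, absurd (Or.inr h) hc, h]
  -- the red–blue–red patterns of this walk are the blue–red–blue patterns of `(a, b)`
  have h₂ : ∀ j, b j = a (j + 2) := fun j => by
    rcases twoSwapCloser_or_shorter_or_eq (E := flip F) (F := flip E) hF hE hw.flip hb hk j with
      h | ⟨k', hk', h⟩ | h
    exacts [absurd (Or.inl h.of_flip) hc, absurd (Or.inr ⟨k', hk', h.flip⟩) hc, h]
  have h₃ : a 3 = a 0 := (h₂ 1).symm.trans (h₁ 0).symm
  refine Or.inr (Or.inl
    (exists_threeSwap_closer hE (a := a 0) (b := a 2) (c := a 1) ?_ ?_ ?_ ?_ ?_ ?_))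
  · simpa [h₂ 0] using (hw 0).1
  · simpa [← h₁ 1] using (hw 2).1
  · simpa [← h₁ 0] using (hw 1).1
  · simpa [← h₁ 0] using (hw 1).2
  · simpa [h₂ 0] using (hw 0).2
  · simpa [h₃, ← h₁ 1] using (hw 2).2

theorem reflTransGen_swap_of_realizes {dp dm : Fin n → ℕ} {E F : Fin n → Fin n → Bool}
    (hE : Realizes E dp dm) (hF : Realizes F dp dm) : Relation.ReflTransGen Swap E F := by
  by_cases hEF : E = F
  · exact hEF ▸ .refl
  obtain ⟨k, hk⟩ := exists_hasClosedAltWalk (fun v => (hE.2 v).1.trans (hF.2 v).1.symm)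
    (fun v => (hE.2 v).2.trans (hF.2 v).2.symm) hEF
  induction k using Nat.strong_induction_on with
  | _ k ihk =>
    rcases closer_or_shorter_of_hasClosedAltWalk hE.1 hF.1 hk with
      (⟨G, hG, hlt⟩ | ⟨G, hG, hlt⟩) | ⟨G, hG, hlt⟩ | ⟨k', hk', hcyc⟩
    · exact .head (Or.inl hG) (reflTransGen_swap_of_realizes (realizes_of_twoSwap hG hE) hF)
    · exact .tail (reflTransGen_swap_of_realizes hE (realizes_of_twoSwap hG hF)) (Or.inl hG.symm)
    · exact .head (Or.inr hG) (reflTransGen_swap_of_realizes (realizes_of_threeSwap hG hE) hF)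
    · exact ihk k' hk' hcyc
termination_by edgeDist E F

end

/-- Any two realizations of the same bi-degree sequence are connected by a
finite sequence of two-edge and three-edge swaps, all intermediate digraphs
realizing the same bi-degree sequence. -/
theorem swap_connected (n : ℕ) (dp dm : Fin n → ℕ)
    (E₁ E₂ : Fin n → Fin n → Bool)
    (h₁ : Realizes E₁ dp dm) (h₂ : Realizes E₂ dp dm) :
    ∃ (m : ℕ) (f : Fin (m + 1) → (Fin n → Fin n → Bool)),
      f 0 = E₁ ∧ f (Fin.last m) = E₂ ∧
      (∀ j, Realizes (f j) dp dm) ∧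
      ∀ j : Fin m, Swap (f j.castSucc) (f j.succ) := by
  obtain ⟨m, f, h0, hlast, hstep⟩ :=
    (reflTransGen_swap_of_realizes h₁ h₂).exists_fin_path
  refine ⟨m, f, h0, hlast, fun j => ?_, hstep⟩
  induction j using Fin.induction with
  | zero => exact h0 ▸ h₁
  | succ i ih => exact realizes_of_swap (hstep i) ih
end

section
/- Let (d⁺, d⁻) be a bi-degree sequence in normal order on v_1,...,v_{n-1} with d⁺_n > 0. If (d⁺, d⁻) is bi-graphical, then there exists a realization in which the out-neighborhood of v_n is exactly {v_1, ..., v_{d⁺_n}}. -/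
/-- The first `n` entries of the bi-degree sequence are in normal order:
strictly decreasing in-degrees, ties broken by non-increasing out-degrees. -/
def NormalOrder (n : ℕ) (dp dm : Fin (n + 1) → ℕ) : Prop :=
  ∀ i : ℕ, (h : i + 1 < n) →
    dm ⟨i + 1, by omega⟩ < dm ⟨i, by omega⟩ ∨
      (dm ⟨i + 1, by omega⟩ = dm ⟨i, by omega⟩ ∧
        dp ⟨i + 1, by omega⟩ ≤ dp ⟨i, by omega⟩)

namespace GreedyHH

open Finset

lemma card_flip2 {m : ℕ} {f g : Fin m → Bool} {a b : Fin m} (hab : a ≠ b)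
    (hfa : f a = true) (hfb : f b = false) (hga : g a = false) (hgb : g b = true)
    (hoth : ∀ c, c ≠ a → c ≠ b → g c = f c) :
    (univ.filter (fun x => g x = true)).card = (univ.filter (fun x => f x = true)).card := by
  have key : ∀ x : Fin m, ((if g x = true then 1 else 0) + (if x = a then 1 else 0) : ℕ)
      = (if f x = true then 1 else 0) + (if x = b then 1 else 0) := by
    intro x
    rcases eq_or_ne x a with rfl | hxa
    · simp [hga, hfa, hab]
    rcases eq_or_ne x b with rfl | hxb
    · simp [hgb, hfb, hxa]
    · simp [hoth x hxa hxb, hxa, hxb]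
  have hsum := Finset.sum_congr rfl (fun x (_ : x ∈ univ) => key x)
  rw [Finset.sum_add_distrib, Finset.sum_add_distrib] at hsum
  rw [Finset.sum_ite_eq' univ a (fun _ => 1), Finset.sum_ite_eq' univ b (fun _ => 1)] at hsum
  simp only [mem_univ, if_true] at hsum
  rw [card_filter, card_filter]
  omega

lemma card_congr' {m : ℕ} {f g : Fin m → Bool} (h : ∀ x, g x = f x) :
    (univ.filter (fun x => g x = true)).card = (univ.filter (fun x => f x = true)).card := by
  congr 1; apply Finset.filter_congr; intro x _; simp [h]

lemma sum_flip2 {m : ℕ} {f g : Fin m → Bool} {a b : Fin m} (hab : a ≠ b)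
    (hfa : f a = true) (hfb : f b = false) (hga : g a = false) (hgb : g b = true)
    (hoth : ∀ c, c ≠ a → c ≠ b → g c = f c) :
    (∑ x, if g x = true then (x : ℕ) else 0) + (a : ℕ)
      = (∑ x, if f x = true then (x : ℕ) else 0) + (b : ℕ) := by
  have key : ∀ x : Fin m, ((if g x = true then (x:ℕ) else 0) + (if x = a then (a:ℕ) else 0))
      = (if f x = true then (x:ℕ) else 0) + (if x = b then (b:ℕ) else 0) := by
    intro x
    rcases eq_or_ne x a with rfl | hxa
    · simp [hga, hfa, hab]
    rcases eq_or_ne x b with rfl | hxb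
    · simp [hgb, hfb, hxa]
    · simp [hoth x hxa hxb, hxa, hxb]
  have hsum := Finset.sum_congr rfl (fun x (_ : x ∈ univ) => key x)
  rw [Finset.sum_add_distrib, Finset.sum_add_distrib] at hsum
  rw [Finset.sum_ite_eq' univ a (fun _ => (a:ℕ)), Finset.sum_ite_eq' univ b (fun _ => (b:ℕ))] at hsum
  simpa using hsum

lemma card_reindex {m : ℕ} (σ : Equiv.Perm (Fin m)) (f : Fin m → Bool) :
    (univ.filter (fun x => f (σ x) = true)).card = (univ.filter (fun x => f x = true)).card := by
  rw [card_filter, card_filter]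
  exact Fintype.sum_equiv σ _ _ (fun x => rfl)

/-- The potential: weighted sum of the out-neighborhood of `l`. -/
def Phi {m : ℕ} (E : Fin m → Fin m → Bool) (l : Fin m) : ℕ :=
  ∑ x, if E l x = true then (x : ℕ) else 0

/-- remove a→b, c→d ; add a→d, c→b -/
def sw2 {m : ℕ} (E : Fin m → Fin m → Bool) (a b c d : Fin m) : Fin m → Fin m → Bool :=
  fun p q => if p = a ∧ q = b then false
    else if p = a ∧ q = d then true
    else if p = c ∧ q = d then false
    else if p = c ∧ q = b then true
    else E p q

lemma sw2_realizes {m : ℕ} {E : Fin m → Fin m → Bool} {dp dm : Fin m → ℕ}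
    (hE : Realizes E dp dm) {a b c d : Fin m}
    (hac : a ≠ c) (hbd : b ≠ d) (had : a ≠ d) (hcb : c ≠ b)
    (hab : E a b = true) (hcd : E c d = true)
    (had' : E a d = false) (hcb' : E c b = false) :
    Realizes (sw2 E a b c d) dp dm := by
  have hba : b ≠ a := by intro h; rw [h, hE.1 a] at hab; exact Bool.false_ne_true hab
  have hdc : d ≠ c := by intro h; rw [h, hE.1 c] at hcd; exact Bool.false_ne_true hcd
  constructor
  · intro v
    simp only [sw2]
    split_ifs with h1 h2 h3 h4
    · exact absurd (h1.1.symm.trans h1.2) (Ne.symm hba)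
    · exact absurd (h2.1.symm.trans h2.2) had
    · exact absurd (h3.1.symm.trans h3.2) (Ne.symm hdc)
    · exact absurd (h4.1.symm.trans h4.2) hcb
    · exact hE.1 v
  · intro v
    constructor
    · rcases eq_or_ne v a with hva | hva
      · rw [hva, ← (hE.2 a).1]
        unfold outDeg
        apply card_flip2 hbd hab had'
        · show sw2 E a b c d a b = false; simp [sw2]
        · show sw2 E a b c d a d = true; simp [sw2, Ne.symm hbd]
        · intro q hqb hqd; show sw2 E a b c d a q = E a q
          simp [sw2, hqb, hqd, hac]
      rcases eq_or_ne v c with hvc | hvc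
      · rw [hvc, ← (hE.2 c).1]
        unfold outDeg
        apply card_flip2 (Ne.symm hbd) hcd hcb'
        · show sw2 E a b c d c d = false; simp [sw2, Ne.symm hac]
        · show sw2 E a b c d c b = true; simp [sw2, Ne.symm hac, hbd]
        · intro q hqd hqb; show sw2 E a b c d c q = E c q
          simp [sw2, Ne.symm hac, hqb, hqd]
      · rw [← (hE.2 v).1]
        unfold outDeg
        apply card_congr'
        intro q; show sw2 E a b c d v q = E v q
        simp [sw2, hva, hvc]
    · rcases eq_or_ne v b with hvb | hvb
      · rw [hvb, ← (hE.2 b).2]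
        unfold inDeg
        apply card_flip2 hac hab hcb'
        · show sw2 E a b c d a b = false; simp [sw2]
        · show sw2 E a b c d c b = true; simp [sw2, Ne.symm hac, hbd]
        · intro p hpa hpc; show sw2 E a b c d p b = E p b
          simp [sw2, hpa, hpc]
      rcases eq_or_ne v d with hvd | hvd
      · rw [hvd, ← (hE.2 d).2]
        unfold inDeg
        apply card_flip2 (Ne.symm hac) hcd had'
        · show sw2 E a b c d c d = false; simp [sw2, Ne.symm hac]
        · show sw2 E a b c d a d = true; simp [sw2, Ne.symm hbd]
        · intro p hpc hpa; show sw2 E a b c d p d = E p d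
          simp [sw2, hpa, hpc]
      · rw [← (hE.2 v).2]
        unfold inDeg
        apply card_congr'
        intro p; show sw2 E a b c d p v = E p v
        simp [sw2, hvb, hvd]

/-- remove l→j, j→i, i→y ; add l→i, i→j, j→y -/
def ex3 {m : ℕ} (E : Fin m → Fin m → Bool) (l j i y : Fin m) : Fin m → Fin m → Bool :=
  fun p q => if p = l ∧ q = j then false
    else if p = l ∧ q = i then true
    else if p = j ∧ q = i then false
    else if p = j ∧ q = y then true
    else if p = i ∧ q = y then false
    else if p = i ∧ q = j then true
    else E p q

lemma ex3_realizes {m : ℕ} {E : Fin m → Fin m → Bool} {dp dm : Fin m → ℕ}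
    (hE : Realizes E dp dm) {l j i y : Fin m}
    (hli : l ≠ i) (hlj : l ≠ j) (hij : i ≠ j) (hyi : y ≠ i) (hyj : y ≠ j)
    (e1 : E l j = true) (e2 : E j i = true) (e3 : E i y = true)
    (f1 : E l i = false) (f2 : E i j = false) (f3 : E j y = false) :
    Realizes (ex3 E l j i y) dp dm := by
  have hji : j ≠ i := Ne.symm hij
  have hiy : i ≠ y := Ne.symm hyi
  have hjy : j ≠ y := Ne.symm hyj
  have hil : i ≠ l := Ne.symm hli
  have hjl : j ≠ l := Ne.symm hlj
  constructor
  · intro v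
    simp only [ex3]
    split_ifs with h1 h2 h3 h4 h5 h6
    · exact absurd (h1.1.symm.trans h1.2) hlj
    · exact absurd (h2.1.symm.trans h2.2) hli
    · exact absurd (h3.1.symm.trans h3.2) hji
    · exact absurd (h4.1.symm.trans h4.2) hjy
    · exact absurd (h5.1.symm.trans h5.2) hiy
    · exact absurd (h6.1.symm.trans h6.2) hij
    · exact hE.1 v
  · intro v
    constructor
    · -- out-degrees
      rcases eq_or_ne v l with hvl | hvl
      · rw [hvl, ← (hE.2 l).1]
        unfold outDeg
        apply card_flip2 hji e1 f1
        · show ex3 E l j i y l j = false; simp [ex3]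
        · show ex3 E l j i y l i = true; simp [ex3, hij]
        · intro q hqj hqi; show ex3 E l j i y l q = E l q
          simp [ex3, hqj, hqi, hlj, hli]
      rcases eq_or_ne v j with hvj | hvj
      · rw [hvj, ← (hE.2 j).1]
        unfold outDeg
        apply card_flip2 hiy e2 f3
        · show ex3 E l j i y j i = false; simp [ex3, hjl, hji]
        · show ex3 E l j i y j y = true; simp [ex3, hjl, hji, hyi]
        · intro q hqi hqy; show ex3 E l j i y j q = E j q
          simp [ex3, hjl, hji, hqi, hqy]
      rcases eq_or_ne v i with hvi | hvi
      · rw [hvi, ← (hE.2 i).1]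
        unfold outDeg
        apply card_flip2 hyj e3 f2
        · show ex3 E l j i y i y = false; simp [ex3, hil, hij, hyj]
        · show ex3 E l j i y i j = true; simp [ex3, hil, hij, hjy]
        · intro q hqy hqj; show ex3 E l j i y i q = E i q
          simp [ex3, hil, hij, hqy, hqj]
      · rw [← (hE.2 v).1]
        unfold outDeg
        apply card_congr'
        intro q; show ex3 E l j i y v q = E v q
        simp [ex3, hvl, hvj, hvi]
    · -- in-degrees
      rcases eq_or_ne v i with hvi | hvi
      · rw [hvi, ← (hE.2 i).2]
        unfold inDeg
        apply card_flip2 hjl e2 f1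
        · show ex3 E l j i y j i = false; simp [ex3, hjl, hji]
        · show ex3 E l j i y l i = true; simp [ex3, hij]
        · intro p hpj hpl; show ex3 E l j i y p i = E p i
          simp [ex3, hpj, hpl, hij, hiy]
      rcases eq_or_ne v j with hvj | hvj
      · rw [hvj, ← (hE.2 j).2]
        unfold inDeg
        apply card_flip2 hli e1 f2
        · show ex3 E l j i y l j = false; simp [ex3]
        · show ex3 E l j i y i j = true; simp [ex3, hil, hij, hjy]
        · intro p hpl hpi; show ex3 E l j i y p j = E p j
          simp [ex3, hpl, hpi, hji, hjy]
      rcases eq_or_ne v y with hvy | hvy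
      · rw [hvy, ← (hE.2 y).2]
        unfold inDeg
        apply card_flip2 hij e3 f3
        · show ex3 E l j i y i y = false; simp [ex3, hyj, hyi, hil, hij]
        · show ex3 E l j i y j y = true; simp [ex3, hyj, hyi, hjl, hji]
        · intro p hpi hpj; show ex3 E l j i y p y = E p y
          simp [ex3, hyj, hyi, hpi, hpj]
      · rw [← (hE.2 v).2]
        unfold inDeg
        apply card_congr'
        intro p; show ex3 E l j i y p v = E p v
        simp [ex3, hvi, hvj, hvy]

/-- relabel by transposing `i` and `j`. -/
def tr {m : ℕ} (E : Fin m → Fin m → Bool) (i j : Fin m) : Fin m → Fin m → Bool :=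
  fun p q => E (Equiv.swap i j p) (Equiv.swap i j q)

lemma tr_realizes {m : ℕ} {E : Fin m → Fin m → Bool} {dp dm : Fin m → ℕ}
    (hE : Realizes E dp dm) {i j : Fin m}
    (hdp : dp i = dp j) (hdm : dm i = dm j) :
    Realizes (tr E i j) dp dm := by
  have hfix : ∀ v, dp (Equiv.swap i j v) = dp v ∧ dm (Equiv.swap i j v) = dm v := by
    intro v
    rcases eq_or_ne v i with rfl | hvi
    · simp [Equiv.swap_apply_left, hdp, hdm]
    rcases eq_or_ne v j with rfl | hvj
    · simp [Equiv.swap_apply_right, hdp.symm, hdm.symm]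
    · simp [Equiv.swap_apply_of_ne_of_ne hvi hvj]
  constructor
  · intro v; simp [tr, hE.1]
  · intro v
    constructor
    · have h1 : outDeg (tr E i j) v = outDeg E (Equiv.swap i j v) :=
        card_reindex (Equiv.swap i j) (fun q => E (Equiv.swap i j v) q)
      rw [h1, (hE.2 _).1, (hfix v).1]
    · have h1 : inDeg (tr E i j) v = inDeg E (Equiv.swap i j v) :=
        card_reindex (Equiv.swap i j) (fun p => E p (Equiv.swap i j v))
      rw [h1, (hE.2 _).2, (hfix v).2]

lemma chain_aux {n : ℕ} {dp dm : Fin (n + 1) → ℕ} (hnorm : NormalOrder n dp dm) :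
    ∀ k a : ℕ, (h : a + k < n) →
      dm ⟨a + k, by omega⟩ < dm ⟨a, by omega⟩ ∨
        (dm ⟨a + k, by omega⟩ = dm ⟨a, by omega⟩ ∧ dp ⟨a + k, by omega⟩ ≤ dp ⟨a, by omega⟩) := by
  intro k
  induction k with
  | zero => intro a h; right; exact ⟨rfl, le_rfl⟩
  | succ c ih =>
    intro a h
    have h1 := hnorm (a + c) (by omega)
    have h2 := ih a (by omega)
    rcases h1 with h1 | ⟨h1a, h1b⟩ <;> rcases h2 with h2 | ⟨h2a, h2b⟩
    · exact Or.inl (h1.trans h2)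
    · exact Or.inl (h2a ▸ h1)
    · exact Or.inl (h1a ▸ h2)
    · exact Or.inr ⟨h1a.trans h2a, h1b.trans h2b⟩

lemma chain {n : ℕ} {dp dm : Fin (n + 1) → ℕ} (hnorm : NormalOrder n dp dm)
    {x y : Fin (n + 1)} (hxy : (x : ℕ) ≤ (y : ℕ)) (hy : (y : ℕ) < n) :
    dm y < dm x ∨ (dm y = dm x ∧ dp y ≤ dp x) := by
  have h := chain_aux hnorm ((y : ℕ) - (x : ℕ)) (x : ℕ) (by omega)
  have e1 : (⟨(x : ℕ) + ((y : ℕ) - (x : ℕ)), by omega⟩ : Fin (n + 1)) = y := by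
    apply Fin.ext; simp; omega
  have e2 : (⟨(x : ℕ), by omega⟩ : Fin (n + 1)) = x := Fin.ext rfl
  rw [e1, e2] at h
  exact h

lemma step {n : ℕ} {dp dm : Fin (n + 1) → ℕ} (hnorm : NormalOrder n dp dm)
    {E : Fin (n + 1) → Fin (n + 1) → Bool} (hE : Realizes E dp dm)
    (hbad : ¬ ∀ v, E (Fin.last n) v = true ↔ (v : ℕ) < dp (Fin.last n)) :
    ∃ E', Realizes E' dp dm ∧ Phi E' (Fin.last n) < Phi E (Fin.last n) := by
  set l := Fin.last n with hldef
  set k := dp l with hkdef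
  have hNcard : (univ.filter (fun v => E l v = true)).card = k := (hE.2 l).1
  have hkn : k ≤ n := by
    rw [← hNcard]
    have hsub : (univ.filter (fun v => E l v = true)) ⊆ univ.erase l := by
      intro v hv
      rcases mem_filter.1 hv with ⟨_, hv2⟩
      refine mem_erase.2 ⟨?_, mem_univ v⟩
      rintro rfl
      rw [hE.1 l] at hv2; exact Bool.false_ne_true hv2
    calc (univ.filter (fun v => E l v = true)).card
        ≤ (univ.erase l).card := card_le_card hsub
      _ = n := by rw [card_erase_of_mem (mem_univ l)]; simp
  have hScard : (univ.filter (fun v : Fin (n + 1) => (v : ℕ) < k)).card = k := by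
    have hset : (univ.filter (fun v : Fin (n + 1) => (v : ℕ) < k))
        = Finset.Iio (⟨k, by omega⟩ : Fin (n + 1)) := by
      ext v; simp [Fin.lt_def]
    rw [hset, Fin.card_Iio]
  -- find i : a missing small vertex
  have hSN : ¬ (univ.filter (fun v : Fin (n + 1) => (v : ℕ) < k))
      ⊆ (univ.filter (fun v => E l v = true)) := by
    intro hsub
    have heq := Finset.eq_of_subset_of_card_le hsub (by rw [hNcard, hScard])
    apply hbad
    intro v
    constructor
    · intro hv
      have : v ∈ univ.filter (fun v : Fin (n + 1) => (v : ℕ) < k) := by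
        rw [heq]; exact mem_filter.2 ⟨mem_univ v, hv⟩
      exact (mem_filter.1 this).2
    · intro hv
      have : v ∈ univ.filter (fun v => E l v = true) := by
        rw [← heq]; exact mem_filter.2 ⟨mem_univ v, hv⟩
      exact (mem_filter.1 this).2
  obtain ⟨i, hiS, hiN⟩ := Finset.not_subset.1 hSN
  have hik : (i : ℕ) < k := (mem_filter.1 hiS).2
  have hEli : E l i = false := by
    cases hc : E l i
    · rfl
    · exact absurd (mem_filter.2 ⟨mem_univ i, hc⟩) hiN
  -- find j : a present large vertex
  have hNS : ¬ (univ.filter (fun v => E l v = true))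
      ⊆ (univ.filter (fun v : Fin (n + 1) => (v : ℕ) < k)) := by
    intro hsub
    have heq := Finset.eq_of_subset_of_card_le hsub (by rw [hNcard, hScard])
    exact hiN (heq ▸ hiS)
  obtain ⟨j, hjN, hjS⟩ := Finset.not_subset.1 hNS
  have hElj : E l j = true := (mem_filter.1 hjN).2
  have hjk : k ≤ (j : ℕ) := by
    by_contra hc
    exact hjS (mem_filter.2 ⟨mem_univ j, by omega⟩)
  have hij : (i : ℕ) < (j : ℕ) := lt_of_lt_of_le hik hjk
  have hjl : j ≠ l := by
    rintro rfl
    rw [hE.1 l] at hElj; exact Bool.false_ne_true hElj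
  have hjn : (j : ℕ) < n := by
    have h1 := j.isLt
    have h2 : (j : ℕ) ≠ n := by
      intro hc; exact hjl (Fin.ext (by simp [hldef, Fin.last, hc]))
    omega
  have hil : i ≠ l := by
    intro hc
    have : (i : ℕ) = n := by rw [hc]; simp [hldef, Fin.last]
    omega
  have hijne : i ≠ j := Fin.ne_of_val_ne (by omega)
  have hch := chain hnorm (x := i) (y := j) (by omega) hjn
  by_cases heq : dm j = dm i ∧ dp j = dp i
  · -- transposition
    refine ⟨tr E i j, tr_realizes hE heq.2.symm heq.1.symm, ?_⟩
    have hσl : Equiv.swap i j l = l :=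
      Equiv.swap_apply_of_ne_of_ne (Ne.symm hil) (Ne.symm hjl)
    have hs := sum_flip2 (f := fun q => E l q) (g := fun q => tr E i j l q)
        (a := j) (b := i) (Ne.symm hijne) hElj hEli
        (by show E (Equiv.swap i j l) (Equiv.swap i j j) = false
            rw [hσl, Equiv.swap_apply_right]; exact hEli)
        (by show E (Equiv.swap i j l) (Equiv.swap i j i) = true
            rw [hσl, Equiv.swap_apply_left]; exact hElj)
        (by intro c hcj hci
            show E (Equiv.swap i j l) (Equiv.swap i j c) = E l c
            rw [hσl, Equiv.swap_apply_of_ne_of_ne hci hcj])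
    have hphi : Phi (tr E i j) l + (j : ℕ) = Phi E l + (i : ℕ) := hs
    omega
  · have hcase : dm j < dm i ∨ (dm j = dm i ∧ dp j < dp i) := by
      rcases hch with h | ⟨h1, h2⟩
      · exact Or.inl h
      · exact Or.inr ⟨h1, lt_of_le_of_ne h2 (fun he => heq ⟨h1, he⟩)⟩
    have hAcard : (univ.filter (fun x => E x i = true ∧ x ≠ l ∧ x ≠ j)).card
        + (if E j i = true then 1 else 0) = dm i := by
      have key : ∀ x : Fin (n + 1), ((if E x i = true ∧ x ≠ l ∧ x ≠ j then 1 else 0)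
          + (if x = j then (if E j i = true then 1 else 0) else 0) : ℕ)
          = (if E x i = true then 1 else 0) := by
        intro x
        rcases eq_or_ne x l with hxl | hxl
        · rw [hxl]; simp [hEli, Ne.symm hjl]
        rcases eq_or_ne x j with hxj | hxj
        · rw [hxj]; simp
        · simp [hxl, hxj]
      have hsum := Finset.sum_congr rfl (fun x (_ : x ∈ univ) => key x)
      rw [Finset.sum_add_distrib] at hsum
      rw [Finset.sum_ite_eq' univ j (fun _ => (if E j i = true then 1 else 0))] at hsum
      simp only [mem_univ, if_true] at hsum
      rw [← (hE.2 i).2]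
      unfold inDeg
      rw [card_filter, card_filter] at *
      exact hsum
    have hBcard : (univ.filter (fun x => E x j = true ∧ x ≠ l ∧ x ≠ j)).card + 1 = dm j := by
      have key : ∀ x : Fin (n + 1), ((if E x j = true ∧ x ≠ l ∧ x ≠ j then 1 else 0)
          + (if x = l then 1 else 0) : ℕ) = (if E x j = true then 1 else 0) := by
        intro x
        rcases eq_or_ne x l with hxl | hxl
        · rw [hxl]; simp [hElj]
        rcases eq_or_ne x j with hxj | hxj
        · rw [hxj]; simp [hE.1 j, hjl]
        · simp [hxl, hxj]
      have hsum := Finset.sum_congr rfl (fun x (_ : x ∈ univ) => key x)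
      rw [Finset.sum_add_distrib] at hsum
      rw [Finset.sum_ite_eq' univ l (fun _ => 1)] at hsum
      simp only [mem_univ, if_true] at hsum
      rw [← (hE.2 j).2]
      unfold inDeg
      rw [card_filter, card_filter] at *
      exact hsum
    by_cases hx : ∃ x, E x i = true ∧ E x j = false ∧ x ≠ l ∧ x ≠ j
    · obtain ⟨x, hxi, hxj, hxl, hxjne⟩ := hx
      refine ⟨sw2 E l j x i, sw2_realizes hE (Ne.symm hxl) (Ne.symm hijne) (Ne.symm hil)
        hxjne hElj hxi hEli hxj, ?_⟩
      have hs := sum_flip2 (f := fun q => E l q) (g := fun q => sw2 E l j x i l q)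
          (a := j) (b := i) (Ne.symm hijne) hElj hEli
          (by show sw2 E l j x i l j = false; simp [sw2])
          (by show sw2 E l j x i l i = true; simp [sw2, hijne])
          (by intro c hcj hci
              show sw2 E l j x i l c = E l c
              simp [sw2, hcj, hci, Ne.symm hxl])
      have hphi : Phi (sw2 E l j x i) l + (j : ℕ) = Phi E l + (i : ℕ) := hs
      omega
    · -- no x : derive E j i, ¬ E i j, and find y
      have hAB : (univ.filter (fun x => E x i = true ∧ x ≠ l ∧ x ≠ j))
          ⊆ (univ.filter (fun x => E x j = true ∧ x ≠ l ∧ x ≠ j)) := by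
        intro x hxA
        rcases mem_filter.1 hxA with ⟨_, hxi, hxl, hxj⟩
        refine mem_filter.2 ⟨mem_univ x, ?_, hxl, hxj⟩
        cases hc : E x j
        · exact absurd ⟨x, hxi, hc, hxl, hxj⟩ hx
        · rfl
      have hAle := card_le_card hAB
      have hite : (if E j i = true then 1 else 0) ≤ 1 := by split_ifs <;> omega
      simp only [ne_eq] at hAcard hBcard hAle hAB
      rcases hcase with hlt | ⟨hdmeq, hdplt⟩
      · omega
      · have hji : E j i = true := by
          cases hc : E j i
          · rw [hc] at hAcard; simp at hAcard; omega
          · rfl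
        rw [hji] at hAcard; simp at hAcard
        have hABeq := Finset.eq_of_subset_of_card_le hAB (by omega)
        have hij' : E i j = false := by
          cases hc : E i j
          · rfl
          · exfalso
            have hiB : i ∈ univ.filter (fun x => E x j = true ∧ x ≠ l ∧ x ≠ j) :=
              mem_filter.2 ⟨mem_univ i, hc, hil, hijne⟩
            rw [← hABeq] at hiB
            rcases mem_filter.1 hiB with ⟨_, hii, _⟩
            rw [hE.1 i] at hii; exact Bool.false_ne_true hii
        have hy : ∃ y, E i y = true ∧ E j y = false ∧ y ≠ j := by
          by_contra hny
          have hsub : (univ.filter (fun y => E i y = true))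
              ⊆ (univ.filter (fun y => E j y = true)) := by
            intro y hyy
            have hiy := (mem_filter.1 hyy).2
            have hyj : y ≠ j := by
              rintro rfl
              rw [hij'] at hiy; exact Bool.false_ne_true hiy
            refine mem_filter.2 ⟨mem_univ y, ?_⟩
            cases hc : E j y
            · exact absurd ⟨y, hiy, hc, hyj⟩ hny
            · rfl
          have hcards := card_le_card hsub
          rw [show (univ.filter (fun y => E i y = true)).card = dp i from (hE.2 i).1,
            show (univ.filter (fun y => E j y = true)).card = dp j from (hE.2 j).1] at hcards
          omega
        obtain ⟨y, hiy, hjy, hyj⟩ := hy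
        have hyi : y ≠ i := by
          intro hcy
          rw [hcy, hE.1 i] at hiy; exact Bool.false_ne_true hiy
        refine ⟨ex3 E l j i y, ex3_realizes hE (Ne.symm hil) (Ne.symm hjl) hijne hyi hyj
          hElj hji hiy hEli hij' hjy, ?_⟩
        have hs := sum_flip2 (f := fun q => E l q) (g := fun q => ex3 E l j i y l q)
            (a := j) (b := i) (Ne.symm hijne) hElj hEli
            (by show ex3 E l j i y l j = false; simp [ex3])
            (by show ex3 E l j i y l i = true; simp [ex3, hijne])
            (by intro c hcj hci
                show ex3 E l j i y l c = E l c
                simp [ex3, hcj, hci, Ne.symm hjl, Ne.symm hil])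
        have hphi : Phi (ex3 E l j i y) l + (j : ℕ) = Phi E l + (i : ℕ) := hs
        omega

end GreedyHH

/-- Greedy form of the directed Havel–Hakimi theorem: a bi-graphical sequence
in normal order with positive last out-degree has a realization in which the
out-neighborhood of the last vertex is exactly the first `dp (last)`
vertices. -/
theorem exists_greedy_realization (n : ℕ) (dp dm : Fin (n + 1) → ℕ)
    (hnorm : NormalOrder n dp dm)
    (hlast : 0 < dp (Fin.last n))
    (h : BiGraphical (n + 1) dp dm) :
    ∃ E : Fin (n + 1) → Fin (n + 1) → Bool,
      Realizes E dp dm ∧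
      ∀ v, E (Fin.last n) v = true ↔ (v : ℕ) < dp (Fin.last n) := by
  obtain ⟨E0, hE0⟩ := h
  suffices H : ∀ m : ℕ, ∀ E : Fin (n + 1) → Fin (n + 1) → Bool, Realizes E dp dm →
      GreedyHH.Phi E (Fin.last n) ≤ m →
      ∃ E', Realizes E' dp dm ∧
        ∀ v, E' (Fin.last n) v = true ↔ (v : ℕ) < dp (Fin.last n) by
    exact H (GreedyHH.Phi E0 (Fin.last n)) E0 hE0 le_rfl
  intro m
  induction m with
  | zero =>
    intro E hE hP
    by_cases hb : ∀ v, E (Fin.last n) v = true ↔ (v : ℕ) < dp (Fin.last n)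
    · exact ⟨E, hE, hb⟩
    · obtain ⟨E', _, hP'⟩ := GreedyHH.step hnorm hE hb
      omega
  | succ m ih =>
    intro E hE hP
    by_cases hb : ∀ v, E (Fin.last n) v = true ↔ (v : ℕ) < dp (Fin.last n)
    · exact ⟨E, hE, hb⟩
    · obtain ⟨E', hE', hP'⟩ := GreedyHH.step hnorm hE hb
      exact ih E' hE' (by omega)
end
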